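/- Let (X,Ω) be a measurable space and E a Dedekind complete Banach lattice. Then the vector lattice M(X,Ω,E) of E-valued measures, normed by ‖μ‖ := ‖|μ|(X)‖, is norm complete, i.e., a Banach lattice. Moreover, if E is an AL-space then so is M(X,Ω,E), and if the norm of E is order continuous then so is the norm of M(X,Ω,E). -/

import Mathlib

variable {X : Type*} [MeasurableSpace X]
variable {E : Type*} [NormedAddCommGroup E] [Lattice E] [HasSolidNorm E]
  [IsOrderedAddMonoid E] [NormedSpace ℝ E]
  [CompleteSpace E]

/-- A finite `E⁺`-valued measure. -/
def IsFinMeasure (μ : Set X → E) : Prop :=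
  μ ∅ = 0 ∧ (∀ Δ, MeasurableSet Δ → 0 ≤ μ Δ) ∧
    ∀ Δ : ℕ → Set X, (∀ n, MeasurableSet (Δ n)) →
      Pairwise (Function.onFun Disjoint Δ) →
      IsLUB (Set.range fun N => ∑ n ∈ Finset.range N, μ (Δ n))
        (μ (⋃ n, Δ n))

/-- The pointwise order on measures. -/
def MeasLE (μ ν : Set X → E) : Prop :=
  ∀ Δ, MeasurableSet Δ → μ Δ ≤ ν Δ

/-!
For a series of positive measures with `∑ ‖νₖ(X)‖ < ∞`, each series `∑ νₖ(Δ)` converges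
absolutely in `E`, because `0 ≤ νₖ(Δ) ≤ νₖ(X)` and the norm is solid; the sum is countably
additive by exchanging the suprema over finitely many `k` and over finitely many pieces of a
partition. Since `‖μ‖ = ‖μ(X)‖` for positive `μ`, the AL-property is inherited from `E`.
For order continuity, Dedekind completeness of `E` provides the pointwise infimum `σ` of a
downward directed family `D` of positive measures. It is finitely additive by directedness, and
countably additive because `μ - σ` is positive and finitely additive for any `μ ∈ D`. So `σ` is a
measure below `D`, hence `σ = 0`, and order continuity of `E` applies to the values at `X`.
-/

open scoped Pointwise

section OrderedGroup

variable {G : Type*} [AddCommGroup G] [PartialOrder G] [IsOrderedAddMonoid G] {ι : Type*}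

lemma isLUB_image_add {s : Set ι} {f g : ι → G} {a b : G}
    (hfg : ∀ i ∈ s, ∀ j ∈ s, ∃ k ∈ s, f i ≤ f k ∧ g j ≤ g k)
    (ha : IsLUB (f '' s) a) (hb : IsLUB (g '' s) b) :
    IsLUB ((fun i => f i + g i) '' s) (a + b) := by
  have hub : upperBounds ((fun i => f i + g i) '' s) = upperBounds (f '' s + g '' s) := by
    refine Set.Subset.antisymm (fun u hu => ?_) (fun u hu => ?_)
    · rintro _ ⟨_, ⟨i, hi, rfl⟩, _, ⟨j, hj, rfl⟩, rfl⟩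
      obtain ⟨k, hk, hik, hjk⟩ := hfg i hi j hj
      exact (add_le_add hik hjk).trans (hu ⟨k, hk, rfl⟩)
    · rintro _ ⟨i, hi, rfl⟩
      exact hu (Set.add_mem_add ⟨i, hi, rfl⟩ ⟨i, hi, rfl⟩)
  rw [IsLUB, hub]
  exact ha.add hb

lemma isGLB_image_add {s : Set ι} {f g : ι → G} {a b : G}
    (hfg : ∀ i ∈ s, ∀ j ∈ s, ∃ k ∈ s, f k ≤ f i ∧ g k ≤ g j)
    (ha : IsGLB (f '' s) a) (hb : IsGLB (g '' s) b) :
    IsGLB ((fun i => f i + g i) '' s) (a + b) :=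
  isLUB_image_add (G := Gᵒᵈ) hfg ha hb

lemma isLUB_range_add [SemilatticeSup ι] {f g : ι → G} {a b : G}
    (hf : Monotone f) (hg : Monotone g)
    (ha : IsLUB (Set.range f) a) (hb : IsLUB (Set.range g) b) :
    IsLUB (Set.range fun i => f i + g i) (a + b) := by
  rw [← Set.image_univ] at ha hb ⊢
  exact isLUB_image_add
    (fun i _ j _ => ⟨i ⊔ j, trivial, hf le_sup_left, hg le_sup_right⟩) ha hb

lemma exists_isGLB_of_exists_isLUB
    (hDed : ∀ T : Set G, T.Nonempty → BddAbove T → ∃ a, IsLUB T a)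
    {T : Set G} (hne : T.Nonempty) (hbdd : BddBelow T) : ∃ a, IsGLB T a := by
  obtain ⟨a, ha⟩ := hDed (-T) hne.neg hbdd.neg
  exact ⟨-a, isLUB_neg.1 ha⟩

end OrderedGroup

section PartialSums

variable {M : Type*} [AddCommMonoid M] [PartialOrder M] [IsOrderedAddMonoid M] {f : ℕ → M}

lemma monotone_sum_range_of_nonneg (hf : ∀ n, 0 ≤ f n) :
    Monotone fun N => ∑ n ∈ Finset.range N, f n :=
  (Finset.sum_mono_set_of_nonneg hf).comp Finset.range_mono

lemma isLUB_range_sum_range_of_hasSum [TopologicalSpace M] [OrderClosedTopology M] {a : M}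
    (hf : ∀ n, 0 ≤ f n) (h : HasSum f a) :
    IsLUB (Set.range fun N => ∑ n ∈ Finset.range N, f n) a :=
  isLUB_of_tendsto_atTop (monotone_sum_range_of_nonneg hf) h.tendsto_sum_nat

end PartialSums

section SetFunction

variable {α : Type*} [MeasurableSpace α] {G : Type*}

def IsFinitelyAdditive [Add G] (μ : Set α → G) : Prop :=
  ∀ A B, MeasurableSet A → MeasurableSet B → Disjoint A B → μ (A ∪ B) = μ A + μ B

namespace IsFinitelyAdditive

variable [AddCommGroup G] {μ ν : Set α → G}

lemma empty (hμ : IsFinitelyAdditive μ) : μ ∅ = 0 := by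
  have h := hμ ∅ ∅ .empty .empty (Set.disjoint_empty _)
  rwa [Set.union_empty, left_eq_add] at h

lemma sub (hμ : IsFinitelyAdditive μ) (hν : IsFinitelyAdditive ν) :
    IsFinitelyAdditive (μ - ν) := fun A B hA hB hAB => by
  simp only [Pi.sub_apply, hμ A B hA hB hAB, hν A B hA hB hAB]
  abel

lemma diff (hμ : IsFinitelyAdditive μ) {A B : Set α} (hA : MeasurableSet A)
    (hB : MeasurableSet B) (hAB : A ⊆ B) : μ (B \ A) = μ B - μ A := by
  rw [eq_sub_iff_add_eq', ← hμ A (B \ A) hA (hB.diff hA) disjoint_sdiff_self_right,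
    Set.union_sdiff_cancel hAB]

lemma mono [PartialOrder G] [IsOrderedAddMonoid G] (hμ : IsFinitelyAdditive μ)
    (h0 : ∀ Δ, MeasurableSet Δ → 0 ≤ μ Δ) {A B : Set α} (hA : MeasurableSet A)
    (hB : MeasurableSet B) (hAB : A ⊆ B) : μ A ≤ μ B := by
  simpa only [hμ.diff hA hB hAB, sub_nonneg] using h0 _ (hB.diff hA)

lemma biUnion_range (hμ : IsFinitelyAdditive μ) {Δ : ℕ → Set α}
    (hm : ∀ n, MeasurableSet (Δ n)) (hd : Pairwise (Function.onFun Disjoint Δ)) (N : ℕ) :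
    μ (⋃ n ∈ Finset.range N, Δ n) = ∑ n ∈ Finset.range N, μ (Δ n) := by
  induction N with
  | zero => simpa using hμ.empty
  | succ N ih =>
    rw [Finset.sum_range_succ, ← ih, Finset.range_add_one, Finset.set_biUnion_insert,
      Set.union_comm]
    refine hμ _ _ (Finset.measurableSet_biUnion _ fun n _ => hm n) (hm N) ?_
    simp only [Set.disjoint_iUnion_left, Finset.mem_range]
    exact fun n hn => hd hn.ne

lemma of_isGLB [Lattice G] [IsOrderedAddMonoid G] {D : Set (Set α → G)}
    (hdir : DirectedOn (fun μ ν => MeasLE ν μ) D) (hD : ∀ μ ∈ D, IsFinitelyAdditive μ)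
    {σ : Set α → G} (hσ : ∀ Δ, MeasurableSet Δ → IsGLB ((fun μ => μ Δ) '' D) (σ Δ)) :
    IsFinitelyAdditive σ := by
  intro A B hA hB hAB
  have h := isGLB_image_add (fun μ hμ ν hν => ?_) (hσ A hA) (hσ B hB)
  · rw [Set.image_congr fun μ hμ => (hD μ hμ A B hA hB hAB).symm] at h
    exact (hσ _ (hA.union hB)).unique h
  · obtain ⟨ρ, hρ, hρμ, hρν⟩ := hdir μ hμ ν hν
    exact ⟨ρ, hρ, hρμ A hA, hρν B hB⟩

end IsFinitelyAdditive

end SetFunction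

section FinMeasure

variable {α : Type*} [MeasurableSpace α] {G : Type*} [NormedAddCommGroup G] [Lattice G]

lemma isFinMeasure_zero : IsFinMeasure (fun _ : Set α => (0 : G)) :=
  ⟨rfl, fun _ _ => le_rfl, fun _ _ _ => by simp [isLUB_singleton]⟩

variable [IsOrderedAddMonoid G]

lemma IsFinMeasure.isFinitelyAdditive {μ : Set α → G} (hμ : IsFinMeasure μ) :
    IsFinitelyAdditive μ := by
  intro A B hA hB hAB
  obtain ⟨h_empty, hnn, hlub⟩ := hμ
  set Δ : ℕ → Set α := fun n => if n = 0 then A else if n = 1 then B else ∅ with hΔ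
  have hm : ∀ n, MeasurableSet (Δ n) := by
    intro n; simp only [hΔ]; split_ifs <;> simp [hA, hB]
  have hd : Pairwise (Function.onFun Disjoint Δ) := by
    intro i j hij; simp only [Function.onFun, hΔ]
    split_ifs <;> first | omega | simp [hAB.symm]
  have hU : ⋃ n, Δ n = A ∪ B := by
    ext x; simp only [Set.mem_iUnion, Set.mem_union, hΔ]
    constructor
    · rintro ⟨n, hn⟩; split_ifs at hn <;> simp_all
    · rintro (hx | hx)
      exacts [⟨0, by simpa⟩, ⟨1, by simpa⟩]
  have hS : ∀ N, 2 ≤ N → ∑ n ∈ Finset.range N, μ (Δ n) = μ A + μ B := by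
    intro N hN
    rw [← Finset.sum_subset (Finset.range_subset_range.2 hN) fun n _ hn => ?_]
    · simp [Finset.sum_range_succ, hΔ]
    · simp only [Finset.mem_range, not_lt] at hn
      simp [hΔ, show n ≠ 0 by omega, show n ≠ 1 by omega, h_empty]
  have hgreatest : IsGreatest (Set.range fun N => ∑ n ∈ Finset.range N, μ (Δ n)) (μ A + μ B) := by
    refine ⟨⟨2, hS 2 le_rfl⟩, ?_⟩
    rintro _ ⟨N, rfl⟩
    exact (monotone_sum_range_of_nonneg (fun n => hnn _ (hm n)) (le_max_left N 2)).trans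
      (hS _ (le_max_right N 2)).le
  exact (hU ▸ hlub Δ hm hd).unique hgreatest.isLUB

lemma IsFinMeasure.add {μ ν : Set α → G} (hμ : IsFinMeasure μ) (hν : IsFinMeasure ν) :
    IsFinMeasure (fun Δ => μ Δ + ν Δ) := by
  refine ⟨by simp [hμ.1, hν.1], fun Δ hΔ => add_nonneg (hμ.2.1 Δ hΔ) (hν.2.1 Δ hΔ),
    fun Δ hm hd => ?_⟩
  simpa only [Finset.sum_add_distrib] using
    isLUB_range_add (monotone_sum_range_of_nonneg fun n => hμ.2.1 _ (hm n))
      (monotone_sum_range_of_nonneg fun n => hν.2.1 _ (hm n)) (hμ.2.2 Δ hm hd) (hν.2.2 Δ hm hd)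

lemma isFinMeasure_sum {ι : Type*} {ν : ι → Set α → G} (s : Finset ι)
    (hν : ∀ k ∈ s, IsFinMeasure (ν k)) : IsFinMeasure (fun Δ => ∑ k ∈ s, ν k Δ) := by
  classical
  induction s using Finset.induction with
  | empty => simpa using isFinMeasure_zero
  | insert k s hk ih =>
    simp only [Finset.sum_insert hk]
    exact (hν k (Finset.mem_insert_self k s)).add
      (ih fun j hj => hν j (Finset.mem_insert_of_mem hj))

lemma isFinMeasure_of_le {σ μ : Set α → G} (hσ : IsFinitelyAdditive σ)
    (hσ0 : ∀ Δ, MeasurableSet Δ → 0 ≤ σ Δ) (hμ : IsFinMeasure μ) (hle : MeasLE σ μ) :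
    IsFinMeasure σ := by
  refine ⟨hσ.empty, hσ0, fun Δ hm hd => ?_⟩
  have hUN : ∀ N, MeasurableSet (⋃ n ∈ Finset.range N, Δ n) := fun N =>
    Finset.measurableSet_biUnion _ fun n _ => hm n
  have hsub : ∀ N, ⋃ n ∈ Finset.range N, Δ n ⊆ ⋃ n, Δ n := fun N =>
    Set.iUnion₂_subset fun n _ => Set.subset_iUnion Δ n
  refine ⟨?_, fun u hu => ?_⟩
  · rintro _ ⟨N, rfl⟩
    dsimp only
    rw [← hσ.biUnion_range hm hd]
    exact hσ.mono hσ0 (hUN N) (.iUnion hm) (hsub N)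
  · -- `μ - σ` is positive and finitely additive, hence monotone
    have hτ0 : ∀ Δ, MeasurableSet Δ → 0 ≤ (μ - σ) Δ := fun Δ hΔ => sub_nonneg.2 (hle Δ hΔ)
    have hkey : ∀ N, ∑ n ∈ Finset.range N, μ (Δ n) ≤ u + μ (⋃ n, Δ n) - σ (⋃ n, Δ n) := by
      intro N
      have h := (hμ.isFinitelyAdditive.sub hσ).mono hτ0 (hUN N) (.iUnion hm) (hsub N)
      rw [Pi.sub_apply, Pi.sub_apply, hμ.isFinitelyAdditive.biUnion_range hm hd,
        hσ.biUnion_range hm hd] at h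
      calc ∑ n ∈ Finset.range N, μ (Δ n)
          = (∑ n ∈ Finset.range N, μ (Δ n) - ∑ n ∈ Finset.range N, σ (Δ n)) +
            ∑ n ∈ Finset.range N, σ (Δ n) := (sub_add_cancel _ _).symm
        _ ≤ (μ (⋃ n, Δ n) - σ (⋃ n, Δ n)) + u := add_le_add h (hu ⟨N, rfl⟩)
        _ = u + μ (⋃ n, Δ n) - σ (⋃ n, Δ n) := by abel
    have h := (hμ.2.2 Δ hm hd).2 (by rintro _ ⟨N, rfl⟩; exact hkey N)
    rwa [le_sub_iff_add_le, add_comm u, add_le_add_iff_left] at h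

lemma exists_isFinMeasure_isGLB
    (hDed : ∀ T : Set G, T.Nonempty → BddAbove T → ∃ a, IsLUB T a)
    {D : Set (Set α → G)} (hne : D.Nonempty) (hD : ∀ μ ∈ D, IsFinMeasure μ)
    (hdir : DirectedOn (fun μ ν => MeasLE ν μ) D) :
    ∃ σ, IsFinMeasure σ ∧ ∀ Δ, MeasurableSet Δ → IsGLB ((fun μ => μ Δ) '' D) (σ Δ) := by
  have hglb : ∀ Δ, ∃ a, MeasurableSet Δ → IsGLB ((fun μ => μ Δ) '' D) a := by
    intro Δ
    by_cases hΔ : MeasurableSet Δ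
    · obtain ⟨a, ha⟩ := exists_isGLB_of_exists_isLUB hDed (hne.image _)
        ⟨0, by rintro _ ⟨μ, hμ, rfl⟩; exact (hD μ hμ).2.1 Δ hΔ⟩
      exact ⟨a, fun _ => ha⟩
    · exact ⟨0, fun h => absurd h hΔ⟩
  choose σ hσ using hglb
  obtain ⟨μ, hμ⟩ := hne
  have hσ0 : ∀ Δ, MeasurableSet Δ → 0 ≤ σ Δ := fun Δ hΔ =>
    (hσ Δ hΔ).2 (by rintro _ ⟨ν, hν, rfl⟩; exact (hD ν hν).2.1 Δ hΔ)
  have hσ_add := IsFinitelyAdditive.of_isGLB hdir (fun ν hν => (hD ν hν).isFinitelyAdditive) hσ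
  exact ⟨σ, isFinMeasure_of_le hσ_add hσ0 (hD μ hμ) fun Δ hΔ => (hσ Δ hΔ).1 ⟨μ, hμ, rfl⟩, hσ⟩

variable [HasSolidNorm G]

lemma IsFinMeasure.norm_le_norm_univ {μ : Set α → G} (hμ : IsFinMeasure μ) {Δ : Set α}
    (hΔ : MeasurableSet Δ) : ‖μ Δ‖ ≤ ‖μ Set.univ‖ :=
  norm_le_norm_of_abs_le_abs <| abs_le_abs_of_nonneg (hμ.2.1 Δ hΔ) <|
    hμ.isFinitelyAdditive.mono hμ.2.1 hΔ .univ (Set.subset_univ Δ)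

lemma summable_of_summable_norm_univ [CompleteSpace G] {ν : ℕ → Set α → G}
    (hν : ∀ k, IsFinMeasure (ν k)) (hsum : Summable fun k => ‖ν k Set.univ‖) {Δ : Set α}
    (hΔ : MeasurableSet Δ) : Summable fun k => ν k Δ :=
  .of_norm <| hsum.of_nonneg_of_le (fun _ => norm_nonneg _) fun k => (hν k).norm_le_norm_univ hΔ

lemma isFinMeasure_tsum {ν : ℕ → Set α → G} (hν : ∀ k, IsFinMeasure (ν k))
    (hs : ∀ Δ, MeasurableSet Δ → Summable fun k => ν k Δ) :
    IsFinMeasure fun Δ => ∑' k, ν k Δ := by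
  refine ⟨by simp [(hν _).1], fun Δ hΔ => tsum_nonneg fun k => (hν k).2.1 Δ hΔ,
    fun Δ hm hd => ⟨?_, fun u hu => ?_⟩⟩
  · rintro _ ⟨N, rfl⟩
    dsimp only
    rw [← Summable.tsum_finsetSum fun n _ => hs _ (hm n)]
    exact Summable.tsum_le_tsum (fun k => ((hν k).2.2 Δ hm hd).1 ⟨N, rfl⟩)
      (summable_sum fun n _ => hs _ (hm n)) (hs _ (.iUnion hm))
  · refine (hs _ (.iUnion hm)).tsum_le_of_sum_range_le fun K => ?_
    refine ((isFinMeasure_sum (Finset.range K) fun k _ => hν k).2.2 Δ hm hd).2 ?_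
    rintro _ ⟨N, rfl⟩
    calc ∑ n ∈ Finset.range N, ∑ k ∈ Finset.range K, ν k (Δ n)
        ≤ ∑ n ∈ Finset.range N, ∑' k, ν k (Δ n) := Finset.sum_le_sum fun n _ =>
          (hs _ (hm n)).sum_le_tsum _ fun k _ => (hν k).2.1 _ (hm n)
      _ ≤ u := hu ⟨N, rfl⟩

end FinMeasure

/-- for `E` a Dedekind complete Banach lattice, `M(X,Ω,E)` with
the norm `‖μ‖ = ‖|μ|(X)‖` is a Banach lattice.  Completeness is expressed by
the Riesz–Fischer property: every norm-absolutely convergent series of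
positive measures has a sum in `M(X,Ω,E)` (which is the supremum of the
partial sums, and the limit of the partial sums at every `Δ`).  Moreover, if
`E` is an AL-space then so is `M(X,Ω,E)`, and if the norm of `E` is order
continuous then so is that of `M(X,Ω,E)`. -/
theorem stmt_19
    (hDed : ∀ T : Set E, T.Nonempty → BddAbove T → ∃ a, IsLUB T a) :
    -- Riesz–Fischer property: norm completeness of `M(X,Ω,E)`
    (∀ ν : ℕ → Set X → E, (∀ k, IsFinMeasure (ν k)) →
      (Summable fun k => ‖ν k Set.univ‖) →
      ∃ μ : Set X → E, IsFinMeasure μ ∧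
        (∀ Δ, MeasurableSet Δ → HasSum (fun k => ν k Δ) (μ Δ)) ∧
        ∀ Δ, MeasurableSet Δ →
          IsLUB (Set.range fun N => ∑ k ∈ Finset.range N, ν k Δ) (μ Δ)) ∧
    -- if `E` is an AL-space then the norm of `M(X,Ω,E)` is additive on
    -- the positive cone (note `‖μ‖ = ‖μ(X)‖` for positive `μ`)
    ((∀ a b : E, 0 ≤ a → 0 ≤ b → ‖a + b‖ = ‖a‖ + ‖b‖) →
      ∀ μ ν : Set X → E, IsFinMeasure μ → IsFinMeasure ν →
        ‖μ Set.univ + ν Set.univ‖ = ‖μ Set.univ‖ + ‖ν Set.univ‖) ∧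
    -- if the norm of `E` is order continuous then so is that of `M(X,Ω,E)`:
    -- a downward directed set of positive measures with pointwise infimum `0`
    -- contains measures of arbitrarily small norm
    ((∀ A : Set E, A.Nonempty → DirectedOn (· ≥ ·) A → IsGLB A 0 →
        ∀ ε > 0, ∃ a ∈ A, ‖a‖ < ε) →
      ∀ D : Set (Set X → E), D.Nonempty → (∀ μ ∈ D, IsFinMeasure μ) →
        DirectedOn (fun μ ν => MeasLE ν μ) D →
        (∀ σ : Set X → E, IsFinMeasure σ → (∀ μ ∈ D, MeasLE σ μ) →
          ∀ Δ, MeasurableSet Δ → σ Δ ≤ 0) →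
        ∀ ε > 0, ∃ μ ∈ D, ‖μ Set.univ‖ < ε) := by
  refine ⟨fun ν hν hsum => ?_, fun hAL μ ν hμ hν => ?_, fun hE D hne hD hdir hinf => ?_⟩
  · have hs := fun Δ (hΔ : MeasurableSet Δ) => summable_of_summable_norm_univ hν hsum hΔ
    exact ⟨_, isFinMeasure_tsum hν hs, fun Δ hΔ => (hs Δ hΔ).hasSum, fun Δ hΔ =>
      isLUB_range_sum_range_of_hasSum (fun k => (hν k).2.1 Δ hΔ) (hs Δ hΔ).hasSum⟩
  · exact hAL _ _ (hμ.2.1 _ .univ) (hν.2.1 _ .univ)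
  · obtain ⟨σ, hσ, hσD⟩ := exists_isFinMeasure_isGLB hDed hne hD hdir
    have hσ_univ : σ Set.univ = 0 := le_antisymm
      (hinf σ hσ (fun μ hμ Δ hΔ => (hσD Δ hΔ).1 ⟨μ, hμ, rfl⟩) _ .univ) (hσ.2.1 _ .univ)
    have hdir_univ : DirectedOn (· ≥ ·) ((fun μ => μ Set.univ) '' D) :=
      directedOn_image.2 (hdir.mono' fun _ _ _ _ h => h _ .univ)
    intro ε hε
    obtain ⟨_, ⟨μ, hμ, rfl⟩, hμε⟩ :=
      hE _ (hne.image _) hdir_univ (hσ_univ ▸ hσD _ .univ) ε hε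
    exact ⟨μ, hμ, hμε⟩
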